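/- arXiv:2110.10313 — 2 statements merged into one kernel-verified Lean document; each statement's English description precedes it below -/
import Mathlib

section
/- Let f = (f₁,…,f_s) ∈ ℚ[x]^s with V(f) smooth (Jacobian of rank s everywhere on V(f)), V(f) ∩ ℝⁿ bounded, and g ∈ ℚ[x]. If C is a connected component of (V(f) \ V(g)) ∩ ℝⁿ, then g attains a nonzero extreme value at some point of C, and that point is a critical point of g on V(f). -/
/-!
Because `V(f) ∩ ℝⁿ` is compact and `g` vanishes on `closure C \ C` (a point of the closure where
`g ≠ 0` would belong to the component `C`), `g` attains on `closure C` an extremum of the sign of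
`g x₀`; it is nonzero, so it is attained in `C`. Full rank of the Jacobian makes the real zero set
locally connected there (implicit function theorem), so `C` is a neighbourhood of the point in
`V(f) ∩ ℝⁿ` and the extremum is local on `V(f) ∩ ℝⁿ`. Lagrange multipliers then put `∇g` in the
span of the independent rows of the Jacobian of `f`.
-/

open Matrix MvPolynomial Topology Filter

namespace Matrix

variable {K : Type*} [Field K] {m m' n : Type*}

theorem linearIndependent_row_iff_rank_eq_card [Fintype m] [Fintype n] (A : Matrix m n K) :
    LinearIndependent K A.row ↔ A.rank = Fintype.card m := by
  rw [rank_eq_finrank_span_row, linearIndependent_iff_card_eq_finrank_span, Set.finrank, eq_comm]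

theorem linearIndependent_row_of_map_algebraMap {L : Type*} [Field L] [Algebra K L]
    {A : Matrix m n K} (h : LinearIndependent L (A.map (algebraMap K L)).row) :
    LinearIndependent K A.row :=
  (h.restrict_scalars' K).of_comp (LinearMap.compLeft (Algebra.linearMap K L) n)

theorem range_mulVecLin_eq_top_of_linearIndependent_row [Fintype m] [Fintype n]
    {A : Matrix m n K} (h : LinearIndependent K A.row) : LinearMap.range A.mulVecLin = ⊤ :=
  Submodule.eq_top_of_finrank_eq (by rw [Module.finrank_fintype_fun_eq_card]; exact h.rank_matrix)

theorem rank_fromRows_of_mem_span [Finite m] [Finite m'] [Fintype n] {A : Matrix m n K}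
    {B : Matrix m' n K} (h : ∀ i, B i ∈ Submodule.span K (Set.range A.row)) :
    (fromRows A B).rank = A.rank := by
  have hrow : Set.range (fromRows A B).row = Set.range A.row ∪ Set.range B.row := by
    rw [← Set.Sum.elim_range]; rfl
  rw [rank_eq_finrank_span_row, rank_eq_finrank_span_row, hrow, Submodule.span_union,
    sup_eq_left.mpr (Submodule.span_le.mpr (Set.range_subset_iff.mpr h : Set.range B.row ⊆ _))]

end Matrix

section Topology

variable {X : Type*} [TopologicalSpace X]

theorem closure_connectedComponentIn_inter_subset (F : Set X) (x : X) :
    closure (connectedComponentIn F x) ∩ F ⊆ connectedComponentIn F x := by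
  by_cases hx : x ∈ F
  · have hT : IsPreconnected (closure (connectedComponentIn F x) ∩ F) :=
      isPreconnected_connectedComponentIn.subset_closure
        (Set.subset_inter subset_closure (connectedComponentIn_subset _ _)) Set.inter_subset_left
    exact hT.subset_connectedComponentIn ⟨subset_closure (mem_connectedComponentIn hx), hx⟩
      Set.inter_subset_right
  · simp [connectedComponentIn_eq_empty hx]

theorem IsCompact.exists_isExtrOn_ne_zero {K C : Set X} {g : X → ℝ} (hK : IsCompact K)
    (hCK : C ⊆ K) (hg : ContinuousOn g K) (hzero : ∀ y ∈ K \ C, g y = 0) {x₀ : X}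
    (hx₀ : x₀ ∈ C) (hgx₀ : g x₀ ≠ 0) : ∃ x ∈ C, g x ≠ 0 ∧ IsExtrOn g K x := by
  have hmemC : ∀ x ∈ K, g x ≠ 0 → x ∈ C := fun x hxK hgx =>
    by_contra fun hxC => hgx (hzero x ⟨hxK, hxC⟩)
  rcases hgx₀.lt_or_gt with hneg | hpos
  · obtain ⟨x, hxK, hmin⟩ := hK.exists_isMinOn ⟨x₀, hCK hx₀⟩ hg
    have hgx : g x < 0 := (isMinOn_iff.mp hmin x₀ (hCK hx₀)).trans_lt hneg
    exact ⟨x, hmemC x hxK hgx.ne, hgx.ne, hmin.isExtr⟩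
  · obtain ⟨x, hxK, hmax⟩ := hK.exists_isMaxOn ⟨x₀, hCK hx₀⟩ hg
    have hgx : 0 < g x := hpos.trans_le (isMaxOn_iff.mp hmax x₀ (hCK hx₀))
    exact ⟨x, hmemC x hxK hgx.ne', hgx.ne', hmax.isExtr⟩

theorem exists_isExtrOn_connectedComponentIn_ne_zero {V : Set X} {g : X → ℝ}
    (hVc : IsCompact V) (hV : IsClosed V) (hg : Continuous g) {x₀ : X} (hx₀ : x₀ ∈ V)
    (hgx₀ : g x₀ ≠ 0) :
    ∃ x ∈ connectedComponentIn (V ∩ {x | g x ≠ 0}) x₀, g x ≠ 0 ∧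
      IsExtrOn g (connectedComponentIn (V ∩ {x | g x ≠ 0}) x₀) x := by
  set C := connectedComponentIn (V ∩ {x | g x ≠ 0}) x₀
  have hCV : closure C ⊆ V :=
    closure_minimal ((connectedComponentIn_subset _ _).trans Set.inter_subset_left) hV
  have hzero : ∀ y ∈ closure C \ C, g y = 0 := fun y hy => by
    by_contra hgy
    exact hy.2 (closure_connectedComponentIn_inter_subset _ _ ⟨hy.1, hCV hy.1, hgy⟩)
  obtain ⟨x, hxC, hgx, hext⟩ :=
    (hVc.of_isClosed_subset isClosed_closure hCV).exists_isExtrOn_ne_zero subset_closure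
      hg.continuousOn hzero (mem_connectedComponentIn ⟨hx₀, hgx₀⟩) hgx₀
  exact ⟨x, hxC, hgx, hext.on_subset subset_closure⟩

theorem connectedComponentIn_inter_mem_nhdsWithin {V W U : Set X} {x₀ x : X}
    (hx : x ∈ connectedComponentIn (V ∩ W) x₀) (hU : U ∈ 𝓝 x) (hUW : U ⊆ W)
    (hVU : IsPreconnected (V ∩ U)) : connectedComponentIn (V ∩ W) x₀ ∈ 𝓝[V] x := by
  rw [connectedComponentIn_eq hx]
  exact mem_of_superset (inter_mem_nhdsWithin V hU)
    (hVU.subset_connectedComponentIn ⟨(connectedComponentIn_subset _ _ hx).1, mem_of_mem_nhds hU⟩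
      (Set.inter_subset_inter_right V hUW))

end Topology

theorem HasStrictFDerivAt.exists_isPreconnected_level_inter {E F : Type*}
    [NormedAddCommGroup E] [NormedSpace ℝ E] [CompleteSpace E]
    [NormedAddCommGroup F] [NormedSpace ℝ F] [FiniteDimensional ℝ F]
    {f : E → F} {f' : E →L[ℝ] F} {a : E} (hf : HasStrictFDerivAt f f' a) (hf' : f'.range = ⊤)
    {W : Set E} (hW : W ∈ 𝓝 a) : ∃ U ∈ 𝓝 a, U ⊆ W ∧ IsPreconnected ({x | f x = f a} ∩ U) := by
  set e := hf.implicitToOpenPartialHomeomorph f f' hf'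
  have ha : a ∈ e.source := hf.mem_implicitToOpenPartialHomeomorph_source hf'
  have hea : e a ∈ e.target := e.map_source ha
  have hnhds : e.target ∩ e.symm ⁻¹' W ∈ 𝓝 (e a) :=
    inter_mem (e.open_target.mem_nhds hea)
      ((e.continuousAt_symm hea).preimage_mem_nhds (by rwa [e.left_inv ha]))
  obtain ⟨ε, hε, hball⟩ := Metric.mem_nhds_iff.mp hnhds
  set B := Metric.ball (e a) ε
  have hfst : ∀ p ∈ B, f (e.symm p) = p.1 := fun p hp => by
    rw [← hf.implicitToOpenPartialHomeomorph_fst hf', e.right_inv (hball hp).1]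
  -- in the chart `e` the level set is the slice `{f a} × ker f'`, whose trace on a ball is convex
  have hlevel : {x | f x = f a} ∩ e.symm '' B = e.symm '' (B ∩ Prod.fst ⁻¹' {f a}) := by
    rw [Set.inter_comm, ← Set.image_inter_preimage]
    congr 1
    ext p
    exact and_congr_right fun hp => by simp [hfst p hp]
  refine ⟨e.symm '' B, ?_, ?_, ?_⟩
  · simpa only [e.left_inv ha] using e.symm.image_mem_nhds hea (Metric.ball_mem_nhds _ hε)
  · rintro _ ⟨p, hp, rfl⟩
    exact (hball hp).2
  · have hconv : Convex ℝ (B ∩ Prod.fst ⁻¹' {f a}) :=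
      (convex_ball _ _).inter ((convex_singleton (f a)).linear_preimage
        (LinearMap.fst ℝ F f'.ker))
    rw [hlevel]
    exact hconv.isPreconnected.image _ (e.continuousOn_symm.mono fun p hp => (hball hp.1).1)

theorem ContinuousLinearMap.linearIndependent_proj {σ : Type*} [Fintype σ] :
    LinearIndependent ℝ (fun i : σ => (ContinuousLinearMap.proj i : (σ → ℝ) →L[ℝ] ℝ)) := by
  classical
  refine Fintype.linearIndependent_iff.mpr fun c hc i => ?_
  simpa [Pi.single_apply] using congr($hc (Pi.single i 1))

namespace MvPolynomial

variable {σ ι : Type*}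

noncomputable def jacobianAt {R : Type*} [CommSemiring R] (p : ι → MvPolynomial σ R) (x : σ → R) :
    Matrix ι σ R :=
  Matrix.of fun j i => eval x (pderiv i (p j))

theorem eval_map_algebraMap_comp {R A B : Type*} [CommSemiring R] [CommSemiring A]
    [CommSemiring B] [Algebra R A] [Algebra A B] [Algebra R B] [IsScalarTower R A B]
    (x : σ → A) (p : MvPolynomial σ R) :
    eval (algebraMap A B ∘ x) (map (algebraMap R B) p) =
      algebraMap A B (eval x (map (algebraMap R A) p)) := by
  simp only [eval_map, ← aeval_def, aeval_algebraMap_apply]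

variable [Fintype σ]

theorem hasStrictFDerivAt_eval (p : MvPolynomial σ ℝ) (x : σ → ℝ) :
    HasStrictFDerivAt (fun y => eval y p)
      (∑ i, eval x (pderiv i p) • (ContinuousLinearMap.proj i : (σ → ℝ) →L[ℝ] ℝ)) x := by
  classical
  induction p using MvPolynomial.induction_on with
  | C a =>
    simp only [eval_C, pderiv_C, map_zero, zero_smul, Finset.sum_const_zero]
    exact hasStrictFDerivAt_const a x
  | add p q hp hq =>
    simp only [map_add, add_smul, Finset.sum_add_distrib]
    exact hp.add hq
  | mul_X p i hp =>
    simp only [eval_mul, eval_X]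
    refine (hp.mul (hasStrictFDerivAt_apply i x)).congr_fderiv ?_
    ext v
    simp [pderiv_X, Pi.single_apply, apply_ite, mul_add, Finset.sum_add_distrib, Finset.mul_sum,
      mul_comm, mul_left_comm]

variable [Fintype ι] {p : ι → MvPolynomial σ ℝ} {x : σ → ℝ}

theorem exists_isPreconnected_level_inter (hp : LinearIndependent ℝ (jacobianAt p x).row)
    {W : Set (σ → ℝ)} (hW : W ∈ 𝓝 x) :
    ∃ U ∈ 𝓝 x, U ⊆ W ∧ IsPreconnected ({y | ∀ j, eval y (p j) = eval x (p j)} ∩ U) := by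
  set F' : (σ → ℝ) →L[ℝ] (ι → ℝ) := ContinuousLinearMap.pi fun j =>
    ∑ i, eval x (pderiv i (p j)) • (ContinuousLinearMap.proj i : (σ → ℝ) →L[ℝ] ℝ)
  have hF : HasStrictFDerivAt (fun y j => eval y (p j)) F' x :=
    hasStrictFDerivAt_pi.2 fun j => hasStrictFDerivAt_eval (p j) x
  have hF'A : (F' : (σ → ℝ) →ₗ[ℝ] ι → ℝ) = (jacobianAt p x).mulVecLin := by
    ext v j
    simp [F', mulVec, dotProduct, jacobianAt, mul_comm]
  have hsurj : F'.range = ⊤ := by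
    rw [hF'A]
    exact range_mulVecLin_eq_top_of_linearIndependent_row hp
  simpa only [_root_.funext_iff] using hF.exists_isPreconnected_level_inter hsurj hW

theorem rank_fromRows_jacobianAt_of_isLocalExtrOn {q : MvPolynomial σ ℝ}
    (hp : LinearIndependent ℝ (jacobianAt p x).row)
    (hq : IsLocalExtrOn (fun y => eval y q) {y | ∀ j, eval y (p j) = eval x (p j)} x) :
    (fromRows (jacobianAt p x) (jacobianAt (fun _ : Unit => q) x)).rank = Fintype.card ι := by
  set T := Fintype.linearCombination ℝ
    (fun i : σ => (ContinuousLinearMap.proj i : (σ → ℝ) →L[ℝ] ℝ))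
  have hT : LinearMap.ker T = ⊥ := LinearMap.ker_eq_bot.mpr
    ContinuousLinearMap.linearIndependent_proj.fintypeLinearCombination_injective
  have hgrad :
      (fun i => eval x (pderiv i q)) ∈ Submodule.span ℝ (Set.range (jacobianAt p x).row) := by
    by_contra hnot
    refine hq.linear_dependent_of_hasStrictFDerivAt (f' := fun j => T ((jacobianAt p x).row j))
      (φ' := T fun i => eval x (pderiv i q)) (fun j => hasStrictFDerivAt_eval (p j) x)
      (hasStrictFDerivAt_eval q x) ?_
    have hcomp : Option.elim' (T fun i => eval x (pderiv i q)) (fun j => T ((jacobianAt p x).row j))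
        = T ∘ fun o => Option.casesOn' o (fun i => eval x (pderiv i q)) (jacobianAt p x).row := by
      funext o
      cases o <;> rfl
    rw [hcomp]
    exact (hp.option hnot).map' T hT
  rw [rank_fromRows_of_mem_span (B := jacobianAt (fun _ : Unit => q) x) fun _ => hgrad,
    hp.rank_matrix]

end MvPolynomial

theorem extreme_value_at_critical_point_general
    (n s : ℕ)
    (f : Fin s → MvPolynomial (Fin n) ℚ) (g : MvPolynomial (Fin n) ℚ)
    -- smoothness: the Jacobian has full rank s at every complex point of V(f)
    (hreg : ∀ x : Fin n → ℂ,
      (∀ j, MvPolynomial.eval x (MvPolynomial.map (algebraMap ℚ ℂ) (f j)) = 0) →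
      (Matrix.of fun (j : Fin s) (i : Fin n) =>
        MvPolynomial.eval x
          (MvPolynomial.map (algebraMap ℚ ℂ) (MvPolynomial.pderiv i (f j)))).rank = s)
    -- the real variety is bounded
    (hbdd : Bornology.IsBounded
      {x : Fin n → ℝ | ∀ j, MvPolynomial.eval x (MvPolynomial.map (algebraMap ℚ ℝ) (f j)) = 0})
    (C : Set (Fin n → ℝ)) (x₀ : Fin n → ℝ)
    (hx₀ : x₀ ∈ {x : Fin n → ℝ |
      (∀ j, MvPolynomial.eval x (MvPolynomial.map (algebraMap ℚ ℝ) (f j)) = 0) ∧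
      MvPolynomial.eval x (MvPolynomial.map (algebraMap ℚ ℝ) g) ≠ 0})
    (hC : C = connectedComponentIn
      {x : Fin n → ℝ |
        (∀ j, MvPolynomial.eval x (MvPolynomial.map (algebraMap ℚ ℝ) (f j)) = 0) ∧
        MvPolynomial.eval x (MvPolynomial.map (algebraMap ℚ ℝ) g) ≠ 0} x₀) :
    ∃ xstar ∈ C,
      MvPolynomial.eval xstar (MvPolynomial.map (algebraMap ℚ ℝ) g) ≠ 0 ∧
      ((∀ y ∈ C, MvPolynomial.eval y (MvPolynomial.map (algebraMap ℚ ℝ) g) ≤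
          MvPolynomial.eval xstar (MvPolynomial.map (algebraMap ℚ ℝ) g)) ∨
        (∀ y ∈ C, MvPolynomial.eval xstar (MvPolynomial.map (algebraMap ℚ ℝ) g) ≤
          MvPolynomial.eval y (MvPolynomial.map (algebraMap ℚ ℝ) g))) ∧
      (Matrix.fromRows
        (Matrix.of fun (j : Fin s) (i : Fin n) =>
          MvPolynomial.eval xstar
            (MvPolynomial.map (algebraMap ℚ ℝ) (MvPolynomial.pderiv i (f j))))
        (Matrix.of fun (_ : Unit) (i : Fin n) =>
          MvPolynomial.eval xstar
            (MvPolynomial.map (algebraMap ℚ ℝ) (MvPolynomial.pderiv i g)))).rank = s := by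
  set p : Fin s → MvPolynomial (Fin n) ℝ := fun j => map (algebraMap ℚ ℝ) (f j)
  set q := map (algebraMap ℚ ℝ) g
  set V := {x : Fin n → ℝ | ∀ j, eval x (p j) = 0}
  have hV : IsClosed V := by
    simp only [V, Set.ofPred_forall]
    exact isClosed_iInter fun j => isClosed_eq (continuous_eval _) continuous_const
  subst hC
  obtain ⟨x, hxC, hgx, hext⟩ := exists_isExtrOn_connectedComponentIn_ne_zero
    (Metric.isCompact_of_isClosed_isBounded hV hbdd) hV (continuous_eval q) hx₀.1 hx₀.2
  have hxV : ∀ j, eval x (p j) = 0 := (connectedComponentIn_subset _ _ hxC).1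
  have hJ : LinearIndependent ℝ (jacobianAt p x).row := by
    have hxc : ∀ j, eval (algebraMap ℝ ℂ ∘ x) (map (algebraMap ℚ ℂ) (f j)) = 0 := fun j => by
      rw [eval_map_algebraMap_comp, hxV j, map_zero]
    have hmap : (jacobianAt p x).map (algebraMap ℝ ℂ) = of fun j i =>
        eval (algebraMap ℝ ℂ ∘ x) (map (algebraMap ℚ ℂ) (pderiv i (f j))) := by
      ext j i
      simp only [jacobianAt, p, map_apply, of_apply, pderiv_map, eval_map_algebraMap_comp]
    refine linearIndependent_row_of_map_algebraMap (L := ℂ)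
      ((linearIndependent_row_iff_rank_eq_card _).mpr ?_)
    rw [hmap, hreg _ hxc, Fintype.card_fin]
  have hlevel : {y | ∀ j, eval y (p j) = eval x (p j)} = V := by simp only [hxV, V]
  obtain ⟨U, hU, hUW, hUconn⟩ := exists_isPreconnected_level_inter hJ
    ((isOpen_ne_fun (continuous_eval q) continuous_const).mem_nhds hgx)
  rw [hlevel] at hUconn
  have hloc : IsLocalExtrOn (fun y => eval y q) {y | ∀ j, eval y (p j) = eval x (p j)} x := by
    rw [hlevel]
    exact hext.filter_mono
      (le_principal_iff.mpr (connectedComponentIn_inter_mem_nhdsWithin hxC hU hUW hUconn))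
  refine ⟨x, hxC, hgx, hext.symm.imp isMaxOn_iff.mp isMinOn_iff.mp, ?_⟩
  simpa [jacobianAt, p, q, pderiv_map] using rank_fromRows_jacobianAt_of_isLocalExtrOn hJ hloc

/-- On a smooth variety `V(f)` with bounded real part, on every connected component `C` of
`(V(f) \ V(g)) ∩ ℝⁿ` the polynomial `g` attains a nonzero extreme value at some point of
`C`, and that point is a critical point of `g` on `V(f)` (the Jacobian of `f` augmented
with `∇g` has rank `s` there). -/
theorem extreme_value_at_critical_point
    (n s : ℕ) (hs : s ≤ n)
    (f : Fin s → MvPolynomial (Fin n) ℚ) (g : MvPolynomial (Fin n) ℚ)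
    -- smoothness: the Jacobian has full rank s at every complex point of V(f)
    (hreg : ∀ x : Fin n → ℂ,
      (∀ j, MvPolynomial.eval x (MvPolynomial.map (algebraMap ℚ ℂ) (f j)) = 0) →
      (Matrix.of fun (j : Fin s) (i : Fin n) =>
        MvPolynomial.eval x
          (MvPolynomial.map (algebraMap ℚ ℂ) (MvPolynomial.pderiv i (f j)))).rank = s)
    -- the real variety is bounded
    (hbdd : Bornology.IsBounded
      {x : Fin n → ℝ | ∀ j, MvPolynomial.eval x (MvPolynomial.map (algebraMap ℚ ℝ) (f j)) = 0})
    (C : Set (Fin n → ℝ)) (x₀ : Fin n → ℝ)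
    (hx₀ : x₀ ∈ {x : Fin n → ℝ |
      (∀ j, MvPolynomial.eval x (MvPolynomial.map (algebraMap ℚ ℝ) (f j)) = 0) ∧
      MvPolynomial.eval x (MvPolynomial.map (algebraMap ℚ ℝ) g) ≠ 0})
    (hC : C = connectedComponentIn
      {x : Fin n → ℝ |
        (∀ j, MvPolynomial.eval x (MvPolynomial.map (algebraMap ℚ ℝ) (f j)) = 0) ∧
        MvPolynomial.eval x (MvPolynomial.map (algebraMap ℚ ℝ) g) ≠ 0} x₀) :
    ∃ xstar ∈ C,
      MvPolynomial.eval xstar (MvPolynomial.map (algebraMap ℚ ℝ) g) ≠ 0 ∧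
      ((∀ y ∈ C, MvPolynomial.eval y (MvPolynomial.map (algebraMap ℚ ℝ) g) ≤
          MvPolynomial.eval xstar (MvPolynomial.map (algebraMap ℚ ℝ) g)) ∨
        (∀ y ∈ C, MvPolynomial.eval xstar (MvPolynomial.map (algebraMap ℚ ℝ) g) ≤
          MvPolynomial.eval y (MvPolynomial.map (algebraMap ℚ ℝ) g))) ∧
      (Matrix.fromRows
        (Matrix.of fun (j : Fin s) (i : Fin n) =>
          MvPolynomial.eval xstar
            (MvPolynomial.map (algebraMap ℚ ℝ) (MvPolynomial.pderiv i (f j))))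
        (Matrix.of fun (_ : Unit) (i : Fin n) =>
          MvPolynomial.eval xstar
            (MvPolynomial.map (algebraMap ℚ ℝ) (MvPolynomial.pderiv i g)))).rank = s :=
  extreme_value_at_critical_point_general n s f g hreg hbdd C x₀ hx₀ hC
end

section
/- Let f ∈ ℚ[x]^s and g ∈ ℚ[x] satisfy: V(f) is smooth of codimension s, V(f) ∩ ℝⁿ is bounded, and g has finitely many critical points on V(f). Let L ⊂ ℚ[x,λ] be the Lagrange system and J = ⟨L⟩. Then g(x) ≥ 0 for all x ∈ V(f) ∩ ℝⁿ if and only if g(x,λ) ≥ 0 for all (x,λ) ∈ V(L) ∩ ℝ^{n+s}. -/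
/-!
If `g` took a negative value on `V(f) ∩ ℝⁿ`, which is compact, it would attain a negative
minimum there. At a minimiser the Lagrange multiplier rule gives a nontrivial relation
`Λ₀ ∇g + ∑ Λⱼ ∇fⱼ = 0`. Smoothness of `V(f)` makes the gradients `∇fⱼ` linearly independent at
real points as well, so `Λ₀ ≠ 0` and `λ = Λ / Λ₀` lifts the minimiser to a real point of the
Lagrange system at which `g < 0`.
-/

open Finset Matrix MvPolynomial

theorem MvPolynomial.hasStrictFDerivAt_eval_s16 {𝕜 σ : Type*} [NontriviallyNormedField 𝕜]
    [Fintype σ] (p : MvPolynomial σ 𝕜) (x : σ → 𝕜) :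
    HasStrictFDerivAt (fun y => eval y p)
      (∑ i, eval x (pderiv i p) • (ContinuousLinearMap.proj i : (σ → 𝕜) →L[𝕜] 𝕜)) x := by
  classical
  induction p using MvPolynomial.induction_on with
  | C a =>
    simp only [eval_C]
    refine (hasStrictFDerivAt_const (𝕜 := 𝕜) a x).congr_fderiv
      (ContinuousLinearMap.ext fun v => ?_)
    simp
  | add p q hp hq =>
    simp only [_root_.map_add]
    refine (hp.fun_add hq).congr_fderiv (ContinuousLinearMap.ext fun v => ?_)
    simp [add_mul, sum_add_distrib]
  | mul_X p i hp =>
    simp only [_root_.map_mul, eval_X]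
    refine (hp.fun_mul (hasStrictFDerivAt_apply i x)).congr_fderiv
      (ContinuousLinearMap.ext fun v => ?_)
    simp [Derivation.leibniz, pderiv_X, Pi.single_apply, add_mul, sum_add_distrib, mul_sum,
      apply_ite (eval x), mul_assoc]

section Lagrange

variable {σ ι : Type*} [Fintype σ] [Fintype ι] {F : ι → MvPolynomial σ ℝ}
  {g : MvPolynomial σ ℝ} {z : σ → ℝ}

theorem MvPolynomial.exists_multipliers_of_isLocalExtrOn
    (hextr : IsLocalExtrOn (fun y => eval y g) {y | ∀ j, eval y (F j) = eval z (F j)} z) :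
    ∃ (Λ : ι → ℝ) (Λ₀ : ℝ), (Λ, Λ₀) ≠ 0 ∧
      ∀ i, ∑ j, Λ j * eval z (pderiv i (F j)) + Λ₀ * eval z (pderiv i g) = 0 := by
  classical
  obtain ⟨Λ, Λ₀, hne, hsum⟩ := hextr.exists_multipliers_of_hasStrictFDerivAt
    (fun j => hasStrictFDerivAt_eval_s16 (F j) z) (hasStrictFDerivAt_eval_s16 g z)
  exact ⟨Λ, Λ₀, hne, fun i => by simpa [Pi.single_apply] using congr($hsum (Pi.single i 1))⟩

theorem MvPolynomial.exists_lagrange_multipliers_of_isLocalExtrOn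
    (hextr : IsLocalExtrOn (fun y => eval y g) {y | ∀ j, eval y (F j) = eval z (F j)} z)
    (hF : LinearIndependent ℝ fun j i => eval z (pderiv i (F j))) :
    ∃ lam : ι → ℝ, ∀ i, eval z (pderiv i g) + ∑ j, lam j * eval z (pderiv i (F j)) = 0 := by
  obtain ⟨Λ, Λ₀, hne, hΛ⟩ := exists_multipliers_of_isLocalExtrOn hextr
  have hΛ₀ : Λ₀ ≠ 0 := by
    rintro rfl
    have hΛ0 : Λ = 0 := _root_.funext <| Fintype.linearIndependent_iff.mp hF Λ <|
      _root_.funext fun i => by simpa using hΛ i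
    exact hne (by simp [hΛ0])
  refine ⟨fun j => Λ j / Λ₀, fun i => ?_⟩
  simp only [div_mul_eq_mul_div, ← sum_div]
  field_simp
  linarith [hΛ i]

end Lagrange

theorem Matrix.linearIndependent_row_of_rank_eq_card {m n K : Type*} [Field K] [Fintype m]
    [Fintype n] {M : Matrix m n K} (h : M.rank = Fintype.card m) : LinearIndependent K M.row := by
  rw [linearIndependent_iff_card_eq_finrank_span, Set.finrank, ← M.rank_eq_finrank_span_row, h]

theorem LinearIndependent.of_complex_ofReal {ι n : Type*} {v : ι → n → ℝ}
    (h : LinearIndependent ℂ fun j i => (v j i : ℂ)) : LinearIndependent ℝ v :=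
  .of_comp (LinearMap.compLeft Complex.ofRealCLM.toLinearMap n) (h.restrict_scalars' ℝ)

section Complexification

variable {R σ ι : Type*} [CommSemiring R] [Algebra R ℝ] [Algebra R ℂ] [IsScalarTower R ℝ ℂ]

theorem MvPolynomial.eval_ofReal_map (p : MvPolynomial σ R) (x : σ → ℝ) :
    eval (fun i => (x i : ℂ)) (map (algebraMap R ℂ) p) = eval x (map (algebraMap R ℝ) p) := by
  simp only [eval_map, ← aeval_def]
  exact aeval_algebraMap_apply ℂ x p

theorem MvPolynomial.linearIndependent_pderiv_of_rank_complex [Fintype σ] [Fintype ι]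
    (f : ι → MvPolynomial σ R) (x : σ → ℝ)
    (h : (of fun j i => eval (fun i => (x i : ℂ))
      (map (algebraMap R ℂ) (pderiv i (f j)))).rank = Fintype.card ι) :
    LinearIndependent ℝ fun j i => eval x (pderiv i (map (algebraMap R ℝ) (f j))) := by
  simp only [pderiv_map]
  refine .of_complex_ofReal ?_
  have hrows := linearIndependent_row_of_rank_eq_card h
  simp only [eval_ofReal_map] at hrows
  exact hrows

end Complexification

theorem nonneg_on_variety_iff_nonneg_on_lagrange_general
    (n s : ℕ)
    (f : Fin s → MvPolynomial (Fin n) ℚ) (g : MvPolynomial (Fin n) ℚ)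
    -- smoothness: the Jacobian has full rank s at every complex point of V(f)
    (hreg : ∀ x : Fin n → ℂ,
      (∀ j, MvPolynomial.eval x (MvPolynomial.map (algebraMap ℚ ℂ) (f j)) = 0) →
      (Matrix.of fun (j : Fin s) (i : Fin n) =>
        MvPolynomial.eval x
          (MvPolynomial.map (algebraMap ℚ ℂ) (MvPolynomial.pderiv i (f j)))).rank = s)
    -- the real variety is bounded
    (hbdd : Bornology.IsBounded
      {x : Fin n → ℝ | ∀ j, MvPolynomial.eval x (MvPolynomial.map (algebraMap ℚ ℝ) (f j)) = 0}) :
    (∀ x : Fin n → ℝ,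
        (∀ j, MvPolynomial.eval x (MvPolynomial.map (algebraMap ℚ ℝ) (f j)) = 0) →
        0 ≤ MvPolynomial.eval x (MvPolynomial.map (algebraMap ℚ ℝ) g)) ↔
    (∀ (x : Fin n → ℝ) (lam : Fin s → ℝ),
        ((∀ j, MvPolynomial.eval x (MvPolynomial.map (algebraMap ℚ ℝ) (f j)) = 0) ∧
          (∀ i : Fin n,
            MvPolynomial.eval x (MvPolynomial.map (algebraMap ℚ ℝ) (MvPolynomial.pderiv i g)) +
              ∑ j, lam j * MvPolynomial.eval x
                (MvPolynomial.map (algebraMap ℚ ℝ) (MvPolynomial.pderiv i (f j))) = 0)) →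
        0 ≤ MvPolynomial.eval x (MvPolynomial.map (algebraMap ℚ ℝ) g)) := by
  constructor
  · rintro h x lam ⟨hx, -⟩
    exact h x hx
  intro h x hx
  by_contra! hneg
  have hclosed : IsClosed
      {y : Fin n → ℝ | ∀ j, eval y (map (algebraMap ℚ ℝ) (f j)) = 0} := by
    simp only [Set.ofPred_forall]
    exact isClosed_iInter fun j => isClosed_eq (continuous_eval _) continuous_const
  obtain ⟨z, hz, hzmin⟩ := (Metric.isCompact_of_isClosed_isBounded hclosed hbdd).exists_isMinOn
    ⟨x, hx⟩ (continuous_eval (map (algebraMap ℚ ℝ) g)).continuousOn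
  rw [Set.mem_ofPred_eq] at hz
  have hrank := hreg (fun i => (z i : ℂ)) fun j => by
    rw [eval_ofReal_map, hz j, Complex.ofReal_zero]
  obtain ⟨lam, hlam⟩ := exists_lagrange_multipliers_of_isLocalExtrOn
    (F := fun j => map (algebraMap ℚ ℝ) (f j)) (g := map (algebraMap ℚ ℝ) g)
    (.inl (by simp only [hz]; exact hzmin.localize))
    (linearIndependent_pderiv_of_rank_complex f z (by rwa [Fintype.card_fin]))
  exact (h z lam ⟨hz, by simpa only [pderiv_map] using hlam⟩).not_gt ((hzmin hx).trans_lt hneg)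

/-- Non-negativity on the real variety is equivalent to non-negativity on the real points
of the Lagrange system: if `V(f)` is smooth of codimension `s`, `V(f) ∩ ℝⁿ` is bounded and
`g` has finitely many critical points on `V(f)`, then `g ≥ 0` on `V(f) ∩ ℝⁿ` iff `g ≥ 0`
on `V(L) ∩ ℝ^{n+s}`, where `L` is the Lagrange system of `f` and `g`. -/
theorem nonneg_on_variety_iff_nonneg_on_lagrange
    (n s : ℕ) (hs : s ≤ n)
    (f : Fin s → MvPolynomial (Fin n) ℚ) (g : MvPolynomial (Fin n) ℚ)
    -- smoothness: the Jacobian has full rank s at every complex point of V(f)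
    (hreg : ∀ x : Fin n → ℂ,
      (∀ j, MvPolynomial.eval x (MvPolynomial.map (algebraMap ℚ ℂ) (f j)) = 0) →
      (Matrix.of fun (j : Fin s) (i : Fin n) =>
        MvPolynomial.eval x
          (MvPolynomial.map (algebraMap ℚ ℂ) (MvPolynomial.pderiv i (f j)))).rank = s)
    -- the real variety is bounded
    (hbdd : Bornology.IsBounded
      {x : Fin n → ℝ | ∀ j, MvPolynomial.eval x (MvPolynomial.map (algebraMap ℚ ℝ) (f j)) = 0})
    -- finitely many critical points of g on V(f)
    (hfin : {x : Fin n → ℂ |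
      (∀ j, MvPolynomial.eval x (MvPolynomial.map (algebraMap ℚ ℂ) (f j)) = 0) ∧
      (Matrix.fromRows
        (Matrix.of fun (j : Fin s) (i : Fin n) =>
          MvPolynomial.eval x
            (MvPolynomial.map (algebraMap ℚ ℂ) (MvPolynomial.pderiv i (f j))))
        (Matrix.of fun (_ : Unit) (i : Fin n) =>
          MvPolynomial.eval x
            (MvPolynomial.map (algebraMap ℚ ℂ) (MvPolynomial.pderiv i g)))).rank = s}.Finite) :
    (∀ x : Fin n → ℝ,
        (∀ j, MvPolynomial.eval x (MvPolynomial.map (algebraMap ℚ ℝ) (f j)) = 0) →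
        0 ≤ MvPolynomial.eval x (MvPolynomial.map (algebraMap ℚ ℝ) g)) ↔
    (∀ (x : Fin n → ℝ) (lam : Fin s → ℝ),
        ((∀ j, MvPolynomial.eval x (MvPolynomial.map (algebraMap ℚ ℝ) (f j)) = 0) ∧
          (∀ i : Fin n,
            MvPolynomial.eval x (MvPolynomial.map (algebraMap ℚ ℝ) (MvPolynomial.pderiv i g)) +
              ∑ j, lam j * MvPolynomial.eval x
                (MvPolynomial.map (algebraMap ℚ ℝ) (MvPolynomial.pderiv i (f j))) = 0)) →
        0 ≤ MvPolynomial.eval x (MvPolynomial.map (algebraMap ℚ ℝ) g)) :=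
  nonneg_on_variety_iff_nonneg_on_lagrange_general n s f g hreg hbdd
end
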